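/- arXiv:1912.07339 — 5 statements merged into one kernel-verified Lean document; each statement's English description precedes it below -/
import Mathlib

section
/- The Sierpinski space 𝕊, defined as the free ω-cpo completion of the booleans 𝔹 = {⊥ ≤ ⊤} embedded in the poset of propositions Ω, is a dominance: for every proposition p ∈ Ω and every s ∈ 𝕊, if s implies that p lies in 𝕊, then the conjunction s ∧ p lies in 𝕊. -/
/-- The initial σ-frame `𝕊`, as the least subset of the propositions `Ω = Prop`
containing `False` and `True` and closed under joins of increasing ω-chains
(equivalently, the image of the free ω-cpo completion of `𝔹 = {⊥ ≤ ⊤}` in `Ω`). -/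
inductive InS : Prop → Prop
  | bot : InS False
  | top : InS True
  | sup (c : ℕ → Prop) (mono : ∀ n, c n → c (n + 1)) (h : ∀ n, InS (c n)) :
      InS (∃ n, c n)

theorem InS.of_decidable (p : Prop) [Decidable p] : InS p := by
  by_cases h : p
  · rw [eq_true h]; exact InS.top
  · rw [eq_false h]; exact InS.bot

/-- The Sierpinski space `𝕊 ⊆ Ω` is a dominance: for every proposition
`p ∈ Ω` and every `s ∈ 𝕊`, if `s` implies that `p` lies in `𝕊`, then `s ∧ p` lies in `𝕊`. -/
theorem sierpinski_is_dominance (p s : Prop) (hs : InS s) (h : s → InS p) :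
    InS (s ∧ p) := by
  induction hs with
  | bot => rw [show (False ∧ p) = False from propext (by simp)]; exact InS.bot
  | top =>
    rw [show (True ∧ p) = p from propext (by simp)]
    exact h trivial
  | sup c mono hc ih =>
    rw [show ((∃ n, c n) ∧ p) = (∃ n, c n ∧ p) from propext (by
      constructor
      · rintro ⟨⟨n, hn⟩, hp⟩; exact ⟨n, hn, hp⟩
      · rintro ⟨n, hn, hp⟩; exact ⟨⟨n, hn⟩, hp⟩)]
    exact InS.sup (fun n => c n ∧ p) (fun n ⟨hn, hp⟩ => ⟨mono n hn, hp⟩)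
      (fun n => ih n (fun hn => h ⟨n, hn⟩))
end

section
/- For ω-cpo presentations P and Q, equip the product preorder P × Q with the cover relation generated by (p, q) ◁ U × {q} whenever p ◁ U in P, and (p, q) ◁ {p} × V whenever q ◁ V in Q. Then the canonical map (P × Q)_ω → P_ω × Q_ω induced by the projections is an order isomorphism. -/
/-- A map between preorders is ω-(Scott-)continuous if it is monotone and preserves
least upper bounds of enumerable directed subsets. -/
def OmegaContinuous {C D : Type} [Preorder C] [Preorder D] (f : C → D) : Prop :=
  Monotone f ∧
    ∀ (U : Set C) (x : C), U.Countable → U.Nonempty → DirectedOn (· ≤ ·) U →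
      IsLUB U x → IsLUB (f '' U) (f x)

/-- A preorder is an ω-cpo if every enumerable directed subset has a least upper bound. -/
def IsOmegaCPO (C : Type) [Preorder C] : Prop :=
  ∀ U : Set C, U.Countable → U.Nonempty → DirectedOn (· ≤ ·) U → ∃ x, IsLUB U x

/-- A cover-preserving monotone map from an ω-cpo presentation `(P, Cov)` into an
ordered set: the image of each cover has a least upper bound above the image of the
covered element. -/
def CovMorphism {P C : Type} [Preorder P] [Preorder C]
    (Cov : P → Set P → Prop) (f : P → C) : Prop :=
  Monotone f ∧ ∀ p U, Cov p U → ∃ s, IsLUB (f '' U) s ∧ f p ≤ s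

/-- `(Pω, η)` is the free ω-cpo completion of the ω-cpo presentation `(P, Cov)`:
`Pω` is an ω-cpo, `η` is a cover-preserving monotone map, and every cover-preserving
monotone map from `P` into an ω-cpo extends uniquely to an ω-continuous map on `Pω`. -/
structure IsFreeOmegaCompletion {P : Type} [Preorder P] (Cov : P → Set P → Prop)
    (Pω : Type) [PartialOrder Pω] (η : P → Pω) : Prop where
  cpo : IsOmegaCPO Pω
  eta_morph : CovMorphism Cov η
  extend_unique : ∀ (C : Type) [PartialOrder C], IsOmegaCPO C →
    ∀ f : P → C, CovMorphism Cov f →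
      ∃! g : Pω → C, OmegaContinuous g ∧ ∀ p, g (η p) = f p

/-- The cover relation on the product preorder `P × Q`, generated by
`(p, q) ◁ U × {q}` whenever `p ◁ U` in `P`, and `(p, q) ◁ {p} × V` whenever
`q ◁ V` in `Q`. -/
inductive ProdCov {P Q : Type} (CovP : P → Set P → Prop) (CovQ : Q → Set Q → Prop) :
    P × Q → Set (P × Q) → Prop
  | left {p : P} {q : Q} {U : Set P} :
      CovP p U → ProdCov CovP CovQ (p, q) ((fun u => (u, q)) '' U)
  | right {p : P} {q : Q} {V : Set Q} :
      CovQ q V → ProdCov CovP CovQ (p, q) ((fun v => (p, v)) '' V)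

/-! The proof rests on an induction principle for free completions: a subset of `Pω` that
contains the generators and is closed under lubs of enumerable directed sets is everything,
because the completion maps into that subset, and the composite with the inclusion must be the
identity. With it, a cover-preserving `h : P × Q → C` is extended in two stages: first in the
`P`-variable for each fixed `q`, giving `G q : Pω → C`, then in the `Q`-variable for each fixed
`x : Pω`, giving `K x : Qω → C`. Induction shows that `q ↦ G q x` is again cover preserving and
that `x ↦ K x y` is ω-continuous, and a separately ω-continuous map on a product is jointly
ω-continuous. So `Pω × Qω` is itself a free completion of `P × Q`, and `f` is the comparison map
between two free completions, hence an order isomorphism. -/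

section OmegaContinuous

variable {A B C : Type} [Preorder A] [Preorder B] [Preorder C]

lemma omegaContinuous_id : OmegaContinuous (id : A → A) :=
  ⟨monotone_id, fun _ _ _ _ _ hx => by rwa [Set.image_id]⟩

lemma OmegaContinuous.comp {g : B → C} {f : A → B} (hg : OmegaContinuous g)
    (hf : OmegaContinuous f) : OmegaContinuous (g ∘ f) := by
  refine ⟨hg.1.comp hf.1, fun U x hc hne hd hx => ?_⟩
  rw [Set.image_comp]
  exact hg.2 _ _ (hc.image f) (hne.image f) (hd.mono_comp hf.1) (hf.2 U x hc hne hd hx)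

lemma isLUB_image_prodMk_left {D : Set A} {x : A} (hne : D.Nonempty) (hx : IsLUB D x)
    (b : B) : IsLUB ((fun a => (a, b)) '' D) (x, b) := by
  refine isLUB_prod.2 ⟨?_, ?_⟩
  · simpa only [Set.image_image, Set.image_id'] using hx
  · simpa only [Set.image_image, hne.image_const] using isLUB_singleton

lemma isLUB_image_prodMk_right {D : Set B} {y : B} (hne : D.Nonempty) (hy : IsLUB D y)
    (a : A) : IsLUB (Prod.mk a '' D) (a, y) := by
  refine isLUB_prod.2 ⟨?_, ?_⟩
  · simpa only [Set.image_image, hne.image_const] using isLUB_singleton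
  · simpa only [Set.image_image, Set.image_id'] using hy

lemma omegaContinuous_prodMk_left (b : B) : OmegaContinuous (fun a : A => (a, b)) :=
  ⟨fun _ _ h => ⟨h, le_rfl⟩, fun _ _ _ hne _ hx => isLUB_image_prodMk_left hne hx b⟩

lemma omegaContinuous_prodMk_right (a : A) : OmegaContinuous (Prod.mk a : B → A × B) :=
  ⟨fun _ _ h => ⟨le_rfl, h⟩, fun _ _ _ hne _ hy => isLUB_image_prodMk_right hne hy a⟩

lemma omegaContinuous_of_separately {g : A × B → C}
    (h₁ : ∀ b, OmegaContinuous fun a => g (a, b)) (h₂ : ∀ a, OmegaContinuous fun b => g (a, b)) :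
    OmegaContinuous g := by
  have hmono : Monotone g := fun z z' h => ((h₂ z.1).1 h.2).trans ((h₁ z'.2).1 h.1)
  refine ⟨hmono, fun U z hc hne hd hz => ⟨hmono.mem_upperBounds_image hz.1, fun c hcU => ?_⟩⟩
  obtain ⟨hx, hy⟩ := isLUB_prod.1 hz
  refine ((h₂ z.1).2 _ _ (hc.image _) (hne.image _) (hd.mono_comp monotone_snd) hy).2 ?_
  rintro _ ⟨_, ⟨u, hu, rfl⟩, rfl⟩
  refine ((h₁ u.2).2 _ _ (hc.image _) (hne.image _) (hd.mono_comp monotone_fst) hx).2 ?_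
  rintro _ ⟨_, ⟨v, hv, rfl⟩, rfl⟩
  obtain ⟨w, hw, huw, hvw⟩ := hd u hu v hv
  exact (hmono (show (v.1, u.2) ≤ w from ⟨hvw.1, huw.2⟩)).trans (hcU ⟨w, hw, rfl⟩)

end OmegaContinuous

lemma isOmegaCPO_prod {A B : Type} [PartialOrder A] [PartialOrder B]
    (hA : IsOmegaCPO A) (hB : IsOmegaCPO B) : IsOmegaCPO (A × B) := by
  intro U hc hne hd
  obtain ⟨x, hx⟩ := hA _ (hc.image _) (hne.image _) (hd.mono_comp monotone_fst)
  obtain ⟨y, hy⟩ := hB _ (hc.image _) (hne.image _) (hd.mono_comp monotone_snd)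
  exact ⟨(x, y), isLUB_prod.2 ⟨hx, hy⟩⟩

def IsOmegaClosed {C : Type} [Preorder C] (S : Set C) : Prop :=
  ∀ U ⊆ S, U.Countable → U.Nonempty → DirectedOn (· ≤ ·) U → ∀ x, IsLUB U x → x ∈ S

namespace IsOmegaClosed

variable {C : Type} [PartialOrder C] {S : Set C}

lemma isOmegaCPO (hS : IsOmegaClosed S) (hC : IsOmegaCPO C) : IsOmegaCPO S := by
  intro W hc hne hd
  have hd' := hd.mono_comp (Subtype.mono_coe S)
  obtain ⟨s, hs⟩ := hC _ (hc.image _) (hne.image _) hd'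
  have hsS := hS _ (Set.image_subset_iff.2 fun w _ => w.2) (hc.image _) (hne.image _) hd' s hs
  exact ⟨⟨s, hsS⟩, IsLUB.of_image Subtype.coe_le_coe hs⟩

lemma omegaContinuous_val (hS : IsOmegaClosed S) (hC : IsOmegaCPO C) :
    OmegaContinuous (Subtype.val : S → C) := by
  refine ⟨Subtype.mono_coe S, fun W x hc hne hd hx => ?_⟩
  have hd' := hd.mono_comp (Subtype.mono_coe S)
  obtain ⟨s, hs⟩ := hC _ (hc.image _) (hne.image _) hd'
  have hsS := hS _ (Set.image_subset_iff.2 fun w _ => w.2) (hc.image _) (hne.image _) hd' s hs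
  rwa [show x = ⟨s, hsS⟩ from hx.unique (IsLUB.of_image Subtype.coe_le_coe hs)]

end IsOmegaClosed

lemma isOmegaClosed_setOf_eq {A C : Type} [Preorder A] [PartialOrder C] {f g : A → C}
    (hf : OmegaContinuous f) (hg : OmegaContinuous g) : IsOmegaClosed {a | f a = g a} := by
  intro U hU hc hne hd x hx
  have hfg : f '' U = g '' U := Set.image_congr fun u hu => hU hu
  exact (hfg ▸ hf.2 U x hc hne hd hx).unique (hg.2 U x hc hne hd hx)

section ClosedSets

variable {I A C : Type} [Preorder I] [Preorder A] [Preorder C]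

lemma isOmegaClosed_setOf_monotone {F : I → A → C} (hF : ∀ i, OmegaContinuous (F i)) :
    IsOmegaClosed {a | Monotone fun i => F i a} := by
  intro U hU hc hne hd x hx i j hij
  refine ((hF i).2 U x hc hne hd hx).2 ?_
  rintro _ ⟨u, hu, rfl⟩
  exact (hU hu hij).trans ((hF j).1 (hx.1 hu))

lemma isOmegaClosed_setOf_omegaContinuous {F : I → A → C} (hF : ∀ i, OmegaContinuous (F i)) :
    IsOmegaClosed {a | OmegaContinuous fun i => F i a} := by
  intro U hU hc hne hd x hx
  have hmono := isOmegaClosed_setOf_monotone hF U (fun u hu => (hU hu).1) hc hne hd x hx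
  refine ⟨hmono, fun D y hDc hDne hDd hy => ⟨hmono.mem_upperBounds_image hy.1, fun c hcD => ?_⟩⟩
  refine ((hF y).2 U x hc hne hd hx).2 ?_
  rintro _ ⟨u, hu, rfl⟩
  refine ((hU hu).2 D y hDc hDne hDd hy).2 ?_
  rintro _ ⟨i, hi, rfl⟩
  exact ((hF i).1 (hx.1 hu)).trans (hcD ⟨i, hi, rfl⟩)

lemma isOmegaClosed_setOf_covMorphism {Cov : I → Set I → Prop}
    (hCov : ∀ i V, Cov i V → V.Countable ∧ V.Nonempty ∧ DirectedOn (· ≤ ·) V)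
    (hC : IsOmegaCPO C) {F : I → A → C} (hF : ∀ i, OmegaContinuous (F i)) :
    IsOmegaClosed {a | CovMorphism Cov fun i => F i a} := by
  intro U hU hc hne hd x hx
  have hmono := isOmegaClosed_setOf_monotone hF U (fun u hu => (hU hu).1) hc hne hd x hx
  refine ⟨hmono, fun i V hiV => ?_⟩
  obtain ⟨hVc, hVne, hVd⟩ := hCov i V hiV
  obtain ⟨s, hs⟩ := hC _ (hVc.image _) (hVne.image _) (hVd.mono_comp hmono)
  refine ⟨s, hs, ((hF i).2 U x hc hne hd hx).2 ?_⟩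
  rintro _ ⟨u, hu, rfl⟩
  obtain ⟨su, hsu, hisu⟩ := (hU hu).2 i V hiV
  refine hisu.trans (hsu.2 ?_)
  rintro _ ⟨v, hv, rfl⟩
  exact ((hF v).1 (hx.1 hu)).trans (hs.1 ⟨v, hv, rfl⟩)

end ClosedSets

section CovMorphism

variable {P Q C D : Type} [Preorder P] [Preorder Q] [Preorder C] [Preorder D]
  {CovP : P → Set P → Prop} {CovQ : Q → Set Q → Prop}

lemma CovMorphism.codRestrict {f : P → C} (hf : CovMorphism CovP f)
    (hCov : ∀ p U, CovP p U → U.Countable ∧ U.Nonempty ∧ DirectedOn (· ≤ ·) U)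
    {S : Set C} (hS : IsOmegaClosed S) (hfS : ∀ p, f p ∈ S) :
    CovMorphism CovP (Set.codRestrict f S hfS) := by
  refine ⟨fun _ _ h => hf.1 h, fun p U hpU => ?_⟩
  obtain ⟨s, hs, hps⟩ := hf.2 p U hpU
  obtain ⟨hc, hne, hd⟩ := hCov p U hpU
  have hsS := hS _ (Set.image_subset_iff.2 fun u _ => hfS u) (hc.image _) (hne.image _)
    (hd.mono_comp hf.1) s hs
  refine ⟨⟨s, hsS⟩, IsLUB.of_image Subtype.coe_le_coe ?_, hps⟩
  rwa [Set.image_image]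

lemma CovMorphism.prodCov_left {h : P × Q → C} (hh : CovMorphism (ProdCov CovP CovQ) h)
    (q : Q) : CovMorphism CovP fun p => h (p, q) := by
  refine ⟨fun _ _ hab => hh.1 ⟨hab, le_rfl⟩, fun p U hpU => ?_⟩
  simpa only [Set.image_image] using hh.2 (p, q) _ (ProdCov.left hpU)

lemma CovMorphism.prodCov_right {h : P × Q → C} (hh : CovMorphism (ProdCov CovP CovQ) h)
    (p : P) : CovMorphism CovQ fun q => h (p, q) := by
  refine ⟨fun _ _ hab => hh.1 ⟨le_rfl, hab⟩, fun q V hqV => ?_⟩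
  simpa only [Set.image_image] using hh.2 (p, q) _ (ProdCov.right hqV)

lemma CovMorphism.prodMap {f : P → C} {g : Q → D} (hf : CovMorphism CovP f)
    (hg : CovMorphism CovQ g) (hPne : ∀ p U, CovP p U → U.Nonempty)
    (hQne : ∀ q V, CovQ q V → V.Nonempty) :
    CovMorphism (ProdCov CovP CovQ) (Prod.map f g) := by
  refine ⟨hf.1.prodMap hg.1, ?_⟩
  rintro _ _ (@⟨p, q, U, hpU⟩ | @⟨p, q, V, hqV⟩)
  · obtain ⟨s, hs, hps⟩ := hf.2 p U hpU
    refine ⟨(s, g q), ?_, hps, le_rfl⟩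
    simpa only [Set.image_image, Prod.map_apply] using
      isLUB_image_prodMk_left ((hPne p U hpU).image f) hs (g q)
  · obtain ⟨s, hs, hqs⟩ := hg.2 q V hqV
    refine ⟨(f p, s), ?_, le_rfl, hqs⟩
    simpa only [Set.image_image, Prod.map_apply] using
      isLUB_image_prodMk_right ((hQne q V hqV).image g) hs (f p)

end CovMorphism

namespace IsFreeOmegaCompletion

variable {P Pω : Type} [Preorder P] [PartialOrder Pω] {Cov : P → Set P → Prop} {η : P → Pω}

lemma eq_id (h : IsFreeOmegaCompletion Cov Pω η) {g : Pω → Pω} (hg : OmegaContinuous g)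
    (hgη : ∀ p, g (η p) = η p) : g = id :=
  (h.extend_unique Pω h.cpo η h.eta_morph).unique ⟨hg, hgη⟩ ⟨omegaContinuous_id, fun _ => rfl⟩

lemma induction (h : IsFreeOmegaCompletion Cov Pω η)
    (hCov : ∀ p U, Cov p U → U.Countable ∧ U.Nonempty ∧ DirectedOn (· ≤ ·) U)
    {S : Set Pω} (hS : IsOmegaClosed S) (hη : ∀ p, η p ∈ S) (x : Pω) : x ∈ S := by
  obtain ⟨g, ⟨hg, hgη⟩, -⟩ :=
    h.extend_unique S (hS.isOmegaCPO h.cpo) _ (h.eta_morph.codRestrict hCov hS hη)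
  have hval : Subtype.val ∘ g = id :=
    h.eq_id ((hS.omegaContinuous_val h.cpo).comp hg) fun p => congrArg Subtype.val (hgη p)
  show id x ∈ S
  rw [← congrFun hval x]
  exact (g x).2

lemma ext (h : IsFreeOmegaCompletion Cov Pω η)
    (hCov : ∀ p U, Cov p U → U.Countable ∧ U.Nonempty ∧ DirectedOn (· ≤ ·) U)
    {C : Type} [PartialOrder C] {g₁ g₂ : Pω → C} (h₁ : OmegaContinuous g₁)
    (h₂ : OmegaContinuous g₂) (hη : ∀ p, g₁ (η p) = g₂ (η p)) : g₁ = g₂ :=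
  funext (h.induction hCov (isOmegaClosed_setOf_eq h₁ h₂) hη)

end IsFreeOmegaCompletion

section Product

variable {P Q Pω Qω : Type} [Preorder P] [Preorder Q] [PartialOrder Pω] [PartialOrder Qω]
  {CovP : P → Set P → Prop} {CovQ : Q → Set Q → Prop} {ηP : P → Pω} {ηQ : Q → Qω}

lemma IsFreeOmegaCompletion.prod_ext (hPω : IsFreeOmegaCompletion CovP Pω ηP)
    (hP : ∀ p U, CovP p U → U.Countable ∧ U.Nonempty ∧ DirectedOn (· ≤ ·) U)
    (hQω : IsFreeOmegaCompletion CovQ Qω ηQ)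
    (hQ : ∀ q V, CovQ q V → V.Countable ∧ V.Nonempty ∧ DirectedOn (· ≤ ·) V)
    {C : Type} [PartialOrder C] {g₁ g₂ : Pω × Qω → C} (h₁ : OmegaContinuous g₁)
    (h₂ : OmegaContinuous g₂) (hη : ∀ p q, g₁ (ηP p, ηQ q) = g₂ (ηP p, ηQ q)) : g₁ = g₂ := by
  have hηP : ∀ p, g₁ ∘ Prod.mk (ηP p) = g₂ ∘ Prod.mk (ηP p) := fun p =>
    hQω.ext hQ (h₁.comp (omegaContinuous_prodMk_right _))
      (h₂.comp (omegaContinuous_prodMk_right _)) (hη p)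
  have hsection : ∀ y, (fun x => g₁ (x, y)) = fun x => g₂ (x, y) := fun y =>
    hPω.ext hP (h₁.comp (omegaContinuous_prodMk_left y))
      (h₂.comp (omegaContinuous_prodMk_left y)) fun p => congrFun (hηP p) y
  funext z
  exact congrFun (hsection z.2) z.1

lemma exists_omegaContinuous_prod_extension (hPω : IsFreeOmegaCompletion CovP Pω ηP)
    (hP : ∀ p U, CovP p U → U.Countable ∧ U.Nonempty ∧ DirectedOn (· ≤ ·) U)
    (hQω : IsFreeOmegaCompletion CovQ Qω ηQ)
    (hQ : ∀ q V, CovQ q V → V.Countable ∧ V.Nonempty ∧ DirectedOn (· ≤ ·) V)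
    {C : Type} [PartialOrder C] (hC : IsOmegaCPO C) {h : P × Q → C}
    (hh : CovMorphism (ProdCov CovP CovQ) h) :
    ∃ g : Pω × Qω → C, OmegaContinuous g ∧ ∀ pq, g (Prod.map ηP ηQ pq) = h pq := by
  choose G hG hGη using fun q => (hPω.extend_unique C hC _ (hh.prodCov_left q)).exists
  have hGcov : ∀ x, CovMorphism CovQ fun q => G q x :=
    hPω.induction hP (isOmegaClosed_setOf_covMorphism hQ hC hG) fun p => by
      show CovMorphism CovQ fun q => G q (ηP p)
      simpa only [hGη] using hh.prodCov_right p
  choose K hK hKη using fun x => (hQω.extend_unique C hC _ (hGcov x)).exists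
  have hKleft : ∀ y, OmegaContinuous fun x => K x y :=
    hQω.induction hQ (isOmegaClosed_setOf_omegaContinuous hK) fun q => by
      show OmegaContinuous fun x => K x (ηQ q)
      simpa only [hKη] using hG q
  refine ⟨fun z => K z.1 z.2, omegaContinuous_of_separately hKleft hK, ?_⟩
  rintro ⟨p, q⟩
  simp only [Prod.map, hKη, hGη]

lemma IsFreeOmegaCompletion.prod (hPω : IsFreeOmegaCompletion CovP Pω ηP)
    (hP : ∀ p U, CovP p U → U.Countable ∧ U.Nonempty ∧ DirectedOn (· ≤ ·) U)
    (hQω : IsFreeOmegaCompletion CovQ Qω ηQ)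
    (hQ : ∀ q V, CovQ q V → V.Countable ∧ V.Nonempty ∧ DirectedOn (· ≤ ·) V) :
    IsFreeOmegaCompletion (ProdCov CovP CovQ) (Pω × Qω) (Prod.map ηP ηQ) where
  cpo := isOmegaCPO_prod hPω.cpo hQω.cpo
  eta_morph := hPω.eta_morph.prodMap hQω.eta_morph (fun p U h => (hP p U h).2.1)
    fun q V h => (hQ q V h).2.1
  extend_unique C _ hC h hh := by
    obtain ⟨g, hg, hgη⟩ := exists_omegaContinuous_prod_extension hPω hP hQω hQ hC hh
    refine ⟨g, ⟨hg, hgη⟩, fun g' ⟨hg', hg'η⟩ => hPω.prod_ext hP hQω hQ hg' hg fun p q => ?_⟩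
    rw [← Prod.map_apply, hg'η, hgη]

end Product

/-- the canonical map `(P × Q)_ω → P_ω × Q_ω` induced by the projections
is an order isomorphism. -/
theorem product_presentation
    {P Q Pω Qω PQω : Type} [Preorder P] [Preorder Q]
    [PartialOrder Pω] [PartialOrder Qω] [PartialOrder PQω]
    (CovP : P → Set P → Prop) (CovQ : Q → Set Q → Prop)
    (hP : ∀ p U, CovP p U → U.Countable ∧ U.Nonempty ∧ DirectedOn (· ≤ ·) U)
    (hQ : ∀ q V, CovQ q V → V.Countable ∧ V.Nonempty ∧ DirectedOn (· ≤ ·) V)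
    (ηP : P → Pω) (ηQ : Q → Qω) (η : P × Q → PQω)
    (hPω : IsFreeOmegaCompletion CovP Pω ηP)
    (hQω : IsFreeOmegaCompletion CovQ Qω ηQ)
    (hPQω : IsFreeOmegaCompletion (ProdCov CovP CovQ) PQω η)
    (f : PQω → Pω × Qω) (hf : OmegaContinuous f)
    (hfη : ∀ p q, f (η (p, q)) = (ηP p, ηQ q)) :
    Function.Bijective f ∧ ∀ x y, x ≤ y ↔ f x ≤ f y := by
  have hprod := hPω.prod hP hQω hQ
  obtain ⟨g, ⟨hg, hgη⟩, -⟩ := hprod.extend_unique PQω hPQω.cpo η hPQω.eta_morph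
  have hgf : Function.LeftInverse g f := Function.leftInverse_iff_comp.2 <|
    hPQω.eq_id (hg.comp hf) fun ⟨p, q⟩ => by
      rw [Function.comp_apply, hfη]
      exact hgη (p, q)
  have hfg : Function.RightInverse g f := Function.leftInverse_iff_comp.2 <|
    hprod.eq_id (hf.comp hg) fun ⟨p, q⟩ => by
      rw [Function.comp_apply, hgη (p, q), hfη]
      rfl
  refine ⟨⟨hgf.injective, hfg.surjective⟩, fun x y => ⟨fun h => hf.1 h, fun h => ?_⟩⟩
  simpa only [hgf x, hgf y] using hg.1 h
end

section
/- Addition on ℚ extends uniquely to an ω-continuous binary operation on the lower reals ℝ_l, and multiplication on ℚ⁺ extends uniquely to an ω-continuous binary operation on the non-negative lower reals ℝ_l⁺. Concretely, q ∈ (L₁ + L₂) iff there merely exist q₁ ∈ L₁ and q₂ ∈ L₂ with q₁ + q₂ = q. -/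
theorem InS.congr {p q : Prop} (h : p ↔ q) (hp : InS p) : InS q := (propext h) ▸ hp

theorem InS.and {p q : Prop} (hp : InS p) (hq : InS q) : InS (p ∧ q) := by
  induction hp with
  | bot => exact InS.congr (by simp) InS.bot
  | top => exact InS.congr (by simp) hq
  | sup c mono h ih =>
    refine InS.congr ?_ (InS.sup (fun n => c n ∧ q) (fun n h => ⟨mono n h.1, h.2⟩) ih)
    constructor
    · rintro ⟨n, hn, hq⟩; exact ⟨⟨n, hn⟩, hq⟩
    · rintro ⟨⟨n, hn⟩, hq⟩; exact ⟨n, hn, hq⟩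

theorem InS.or {p q : Prop} (hp : InS p) (hq : InS q) : InS (p ∨ q) := by
  induction hp with
  | bot => exact InS.congr (by simp) hq
  | top => exact InS.congr (by simp) InS.top
  | sup c mono h ih =>
    refine InS.congr ?_ (InS.sup (fun n => c n ∨ q) (fun n h => h.imp (mono n) id) ih)
    constructor
    · rintro ⟨n, hn | hq⟩
      · exact Or.inl ⟨n, hn⟩
      · exact Or.inr hq
    · rintro (⟨n, hn⟩ | hq)
      · exact ⟨n, Or.inl hn⟩
      · exact ⟨0, Or.inr hq⟩

theorem InS.exists_nat (d : ℕ → Prop) (h : ∀ n, InS (d n)) : InS (∃ n, d n) := by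
  have hc : ∀ n, InS (∃ k ≤ n, d k) := by
    intro n
    induction n with
    | zero =>
      refine InS.congr ⟨fun h => ⟨0, le_refl 0, h⟩, ?_⟩ (h 0)
      rintro ⟨k, hk, h⟩; rwa [Nat.le_zero.mp hk] at h
    | succ n ih =>
      refine InS.congr ?_ (ih.or (h (n+1)))
      constructor
      · rintro (⟨k, hk, hd⟩ | hd)
        · exact ⟨k, le_trans hk (Nat.le_succ n), hd⟩
        · exact ⟨n+1, le_refl _, hd⟩
      · rintro ⟨k, hk, hd⟩
        rcases Nat.lt_or_ge k (n+1) with h' | h'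
        · exact Or.inl ⟨k, Nat.lt_succ_iff.mp h', hd⟩
        · exact Or.inr (le_antisymm hk h' ▸ hd)
  refine InS.congr ?_ (InS.sup (fun n => ∃ k ≤ n, d k)
    (fun n ⟨k, hk, hd⟩ => ⟨k, le_trans hk (Nat.le_succ n), hd⟩) hc)
  constructor
  · rintro ⟨n, k, _, hd⟩; exact ⟨k, hd⟩
  · rintro ⟨k, hd⟩; exact ⟨k, k, le_refl k, hd⟩

theorem InS.exists' {α : Type*} [Countable α] [Nonempty α] (P : α → Prop)
    (h : ∀ a, InS (P a)) : InS (∃ a, P a) := by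
  obtain ⟨f, hf⟩ := exists_surjective_nat α
  refine InS.congr ?_ (InS.exists_nat (fun n => P (f n)) (fun n => h _))
  constructor
  · rintro ⟨n, hn⟩; exact ⟨f n, hn⟩
  · rintro ⟨a, ha⟩; obtain ⟨n, rfl⟩ := hf a; exact ⟨n, ha⟩

/-- A lower real: an `𝕊`-valued, inhabited, rounded, downward-closed cut of rationals. -/
structure LowerReal where
  cut : ℚ → Prop
  inS : ∀ q, InS (cut q)
  inhab : ∃ q, cut q
  rounded : ∀ q, cut q → ∃ q', q < q' ∧ cut q'
  lower : ∀ q q', q < q' → cut q' → cut q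

instance : Preorder LowerReal where
  le L₁ L₂ := ∀ q, L₁.cut q → L₂.cut q
  le_refl _ _ h := h
  le_trans _ _ _ h₁ h₂ q hq := h₂ q (h₁ q hq)

/-- The lower real associated to a rational number. -/
def ratLR (q : ℚ) : LowerReal where
  cut p := p < q
  inS _ := InS.of_decidable _
  inhab := ⟨q - 1, by linarith⟩
  rounded p hp := ⟨(p + q) / 2, by constructor <;> linarith⟩
  lower _ _ h h' := lt_trans h h'

/-- The non-negative rationals. -/
abbrev QPlus := {q : ℚ // 0 ≤ q}

/-- The non-negative lower reals `ℝ_l⁺`. -/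
abbrev NNLowerReal := {L : LowerReal // ∀ q : ℚ, q < 0 → L.cut q}

/-- The non-negative lower real associated to a non-negative rational. -/
def ratNN (q : QPlus) : NNLowerReal :=
  ⟨ratLR q.1, fun _ hp => lt_of_lt_of_le hp q.2⟩

def zeroNN : NNLowerReal := ratNN ⟨0, le_refl 0⟩
def oneNN : NNLowerReal := ratNN ⟨1, by norm_num⟩

/-- An ω-continuous binary operation on `ℝ_l` extending addition of rationals. -/
def AddSpec (add : LowerReal → LowerReal → LowerReal) : Prop :=
  (∀ L, OmegaContinuous (add L)) ∧ (∀ L, OmegaContinuous (fun x => add x L)) ∧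
    ∀ q q' : ℚ, add (ratLR q) (ratLR q') = ratLR (q + q')

/-- An ω-continuous binary operation on `ℝ_l⁺` extending multiplication of
non-negative rationals. -/
def MulSpecNN (mul : NNLowerReal → NNLowerReal → NNLowerReal) : Prop :=
  (∀ L, OmegaContinuous (mul L)) ∧ (∀ L, OmegaContinuous (fun x => mul x L)) ∧
    ∀ q q' : QPlus, mul (ratNN q) (ratNN q') = ratNN ⟨q.1 * q'.1, mul_nonneg q.2 q'.2⟩


theorem LowerReal.eq_of_le_le {L₁ L₂ : LowerReal} (h : L₁ ≤ L₂) (h' : L₂ ≤ L₁) :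
    L₁ = L₂ := by
  have hc : L₁.cut = L₂.cut := funext fun q => propext ⟨h q, h' q⟩
  cases L₁; cases L₂; simp_all

theorem isLUB_unique {U : Set LowerReal} {x y : LowerReal}
    (hx : IsLUB U x) (hy : IsLUB U y) : x = y :=
  LowerReal.eq_of_le_le (hx.2 hy.1) (hy.2 hx.1)

theorem ratLR_mono {q q' : ℚ} (h : q ≤ q') : ratLR q ≤ ratLR q' :=
  fun p hp => lt_of_lt_of_le hp h

theorem ratLR_le {q : ℚ} {L : LowerReal} (h : L.cut q) : ratLR q ≤ L :=
  fun p hp => L.lower p q hp h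

/-- every lower real is the LUB of the rationals below it -/
theorem isLUB_rat (L : LowerReal) : IsLUB (ratLR '' {q | L.cut q}) L := by
  constructor
  · rintro _ ⟨q, hq, rfl⟩; exact ratLR_le hq
  · intro M hM q hq
    obtain ⟨q', hlt, hq'⟩ := L.rounded q hq
    exact hM ⟨q', hq', rfl⟩ q hlt

theorem rat_countable (L : LowerReal) : (ratLR '' {q | L.cut q}).Countable :=
  (Set.to_countable _).image _

theorem rat_nonempty (L : LowerReal) : (ratLR '' {q | L.cut q}).Nonempty :=
  let ⟨q, hq⟩ := L.inhab; ⟨ratLR q, q, hq, rfl⟩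

theorem rat_directed (L : LowerReal) : DirectedOn (· ≤ ·) (ratLR '' {q | L.cut q}) := by
  rintro _ ⟨q, hq, rfl⟩ _ ⟨q', hq', rfl⟩
  refine ⟨ratLR (max q q'), ⟨max q q', ?_, rfl⟩, ratLR_mono (le_max_left _ _),
    ratLR_mono (le_max_right _ _)⟩
  rcases le_total q q' with h | h
  · rwa [max_eq_right h]
  · rwa [max_eq_left h]

/-- the union of a countable nonempty family of lower reals -/
def unionLR (U : Set LowerReal) (hne : U.Nonempty) (hc : U.Countable) : LowerReal where
  cut q := ∃ L ∈ U, L.cut q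
  inS q := by
    have : Countable ↥U := hc.to_subtype
    have : Nonempty ↥U := hne.to_subtype
    refine InS.congr ?_ (InS.exists' (fun L : ↥U => (L : LowerReal).cut q)
      (fun L => L.1.inS q))
    exact ⟨fun ⟨L, h⟩ => ⟨L, L.2, h⟩, fun ⟨L, hLU, h⟩ => ⟨⟨L, hLU⟩, h⟩⟩
  inhab := by
    obtain ⟨L, hL⟩ := hne; obtain ⟨q, hq⟩ := L.inhab; exact ⟨q, L, hL, hq⟩
  rounded q := by
    rintro ⟨L, hL, hq⟩
    obtain ⟨q', h1, h2⟩ := L.rounded q hq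
    exact ⟨q', h1, L, hL, h2⟩
  lower q q' h := by
    rintro ⟨L, hL, hq⟩; exact ⟨L, hL, L.lower q q' h hq⟩

theorem isLUB_unionLR (U : Set LowerReal) (hne : U.Nonempty) (hc : U.Countable) :
    IsLUB U (unionLR U hne hc) := by
  constructor
  · intro L hL q hq; exact ⟨L, hL, hq⟩
  · rintro M hM q ⟨L, hL, hq⟩; exact hM hL q hq

theorem cut_of_isLUB {U : Set LowerReal} {x : LowerReal} (hne : U.Nonempty)
    (hc : U.Countable) (h : IsLUB U x) {q : ℚ} :
    x.cut q ↔ ∃ L ∈ U, L.cut q := by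
  rw [isLUB_unique h (isLUB_unionLR U hne hc)]; exact Iff.rfl

/-- the Minkowski-sum addition on lower reals -/
def addLR (L₁ L₂ : LowerReal) : LowerReal where
  cut q := ∃ q₁ q₂, L₁.cut q₁ ∧ L₂.cut q₂ ∧ q₁ + q₂ = q
  inS q := by
    refine InS.congr ?_ (InS.exists' (fun p : ℚ × ℚ =>
      L₁.cut p.1 ∧ L₂.cut p.2 ∧ p.1 + p.2 = q)
      (fun p => (L₁.inS p.1).and ((L₂.inS p.2).and (InS.of_decidable _))))
    exact ⟨fun ⟨p, h⟩ => ⟨p.1, p.2, h⟩, fun ⟨q₁, q₂, h⟩ => ⟨(q₁, q₂), h⟩⟩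
  inhab := by
    obtain ⟨q₁, h₁⟩ := L₁.inhab; obtain ⟨q₂, h₂⟩ := L₂.inhab
    exact ⟨q₁ + q₂, q₁, q₂, h₁, h₂, rfl⟩
  rounded q := by
    rintro ⟨q₁, q₂, h₁, h₂, rfl⟩
    obtain ⟨q₁', hlt, h₁'⟩ := L₁.rounded q₁ h₁
    exact ⟨q₁' + q₂, by linarith, q₁', q₂, h₁', h₂, rfl⟩
  lower q q' h := by
    rintro ⟨q₁, q₂, h₁, h₂, rfl⟩
    exact ⟨q₁ - (q₁ + q₂ - q), q₂, L₁.lower _ _ (by linarith) h₁, h₂, by ring⟩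

theorem addLR_mono_right (L : LowerReal) : Monotone (addLR L) := by
  rintro x y hxy q ⟨q₁, q₂, h₁, h₂, rfl⟩
  exact ⟨q₁, q₂, h₁, hxy q₂ h₂, rfl⟩

theorem addLR_comm (L₁ L₂ : LowerReal) : addLR L₁ L₂ = addLR L₂ L₁ := by
  refine LowerReal.eq_of_le_le ?_ ?_ <;>
    · rintro q ⟨q₁, q₂, h₁, h₂, rfl⟩; exact ⟨q₂, q₁, h₂, h₁, by ring⟩

theorem addLR_cont_right (L : LowerReal) : OmegaContinuous (addLR L) := by
  refine ⟨addLR_mono_right L, fun U x hc hne hdir hlub => ?_⟩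
  constructor
  · rintro _ ⟨u, hu, rfl⟩; exact addLR_mono_right L (hlub.1 hu)
  · rintro M hM q ⟨q₁, q₂, h₁, h₂, rfl⟩
    obtain ⟨u, hu, hu₂⟩ := (cut_of_isLUB hne hc hlub).mp h₂
    exact hM ⟨u, hu, rfl⟩ _ ⟨q₁, q₂, h₁, hu₂, rfl⟩

theorem addLR_cont_left (L : LowerReal) : OmegaContinuous (fun x => addLR x L) := by
  have h : (fun x => addLR x L) = addLR L := funext fun x => addLR_comm x L
  rw [h]; exact addLR_cont_right L

theorem addLR_rat (q q' : ℚ) : addLR (ratLR q) (ratLR q') = ratLR (q + q') := by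
  refine LowerReal.eq_of_le_le ?_ ?_
  · rintro p ⟨q₁, q₂, h₁, h₂, rfl⟩
    exact add_lt_add h₁ h₂
  · intro p hp
    have hp' : p < q + q' := hp
    refine ⟨q - (q + q' - p) / 2, q' - (q + q' - p) / 2, ?_, ?_, by ring⟩ <;>
      · show _ < _; linarith

theorem addLR_spec : AddSpec addLR :=
  ⟨addLR_cont_right, addLR_cont_left, addLR_rat⟩

/-- two ω-continuous self maps of ℝ_l agreeing on rationals agree -/
theorem agree_of_rat {f g : LowerReal → LowerReal} (hf : OmegaContinuous f)
    (hg : OmegaContinuous g) (h : ∀ q, f (ratLR q) = g (ratLR q)) (L : LowerReal) :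
    f L = g L := by
  have hfl := hf.2 _ L (rat_countable L) (rat_nonempty L) (rat_directed L) (isLUB_rat L)
  have hgl := hg.2 _ L (rat_countable L) (rat_nonempty L) (rat_directed L) (isLUB_rat L)
  have himg : f '' (ratLR '' {q | L.cut q}) = g '' (ratLR '' {q | L.cut q}) := by
    rw [← Set.image_comp, ← Set.image_comp]
    exact Set.image_congr (fun q _ => h q)
  rw [himg] at hfl
  exact isLUB_unique hfl hgl

theorem add_unique (add : LowerReal → LowerReal → LowerReal) (h : AddSpec add) :
    add = addLR := by
  obtain ⟨hr, hl, hq⟩ := h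
  have step1 : ∀ q L, add (ratLR q) L = addLR (ratLR q) L := fun q L =>
    agree_of_rat (hr _) (addLR_cont_right _)
      (fun r => by rw [hq, addLR_rat]) L
  funext L₁ L₂
  exact agree_of_rat (hl L₂) (addLR_cont_left L₂) (fun q => step1 q L₂) L₁

theorem NNLowerReal.eq_of_le_le {L₁ L₂ : NNLowerReal} (h : L₁ ≤ L₂) (h' : L₂ ≤ L₁) :
    L₁ = L₂ :=
  Subtype.ext (LowerReal.eq_of_le_le h h')

theorem isLUB_uniqueNN {U : Set NNLowerReal} {x y : NNLowerReal}
    (hx : IsLUB U x) (hy : IsLUB U y) : x = y :=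
  NNLowerReal.eq_of_le_le (hx.2 hy.1) (hy.2 hx.1)

theorem ratNN_le {q : QPlus} {L : NNLowerReal} (h : L.1.cut q.1) : ratNN q ≤ L :=
  fun p hp => L.1.lower p q.1 hp h

theorem ratNN_zero_le (L : NNLowerReal) : ratNN ⟨0, le_refl 0⟩ ≤ L :=
  fun p hp => L.2 p hp

/-- the distinguished set of rational approximations of a non-negative lower real -/
def ratSetNN (L : NNLowerReal) : Set NNLowerReal :=
  ratNN '' {q : QPlus | q.1 = 0 ∨ L.1.cut q.1}

theorem isLUB_ratNN (L : NNLowerReal) : IsLUB (ratSetNN L) L := by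
  constructor
  · rintro _ ⟨q, hq | hq, rfl⟩
    · have : q = ⟨0, le_refl 0⟩ := Subtype.ext hq
      rw [this]; exact ratNN_zero_le L
    · exact ratNN_le hq
  · intro M hM p hp
    rcases lt_or_ge p 0 with h0 | h0
    · exact M.2 p h0
    · obtain ⟨p', hlt, hp'⟩ := L.1.rounded p hp
      exact hM ⟨⟨p', le_of_lt (lt_of_le_of_lt h0 hlt)⟩, Or.inr hp', rfl⟩ p hlt

theorem ratSetNN_countable (L : NNLowerReal) : (ratSetNN L).Countable :=
  (Set.to_countable _).image _

theorem ratSetNN_nonempty (L : NNLowerReal) : (ratSetNN L).Nonempty :=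
  ⟨ratNN ⟨0, le_refl 0⟩, ⟨0, le_refl 0⟩, Or.inl rfl, rfl⟩

theorem ratNN_mono {q q' : QPlus} (h : q.1 ≤ q'.1) : ratNN q ≤ ratNN q' :=
  fun p hp => lt_of_lt_of_le hp h

theorem ratSetNN_directed (L : NNLowerReal) : DirectedOn (· ≤ ·) (ratSetNN L) := by
  rintro _ ⟨q, hq, rfl⟩ _ ⟨q', hq', rfl⟩
  refine ⟨ratNN ⟨max q.1 q'.1, le_max_of_le_left q.2⟩, ⟨⟨max q.1 q'.1, _⟩, ?_, rfl⟩,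
    ratNN_mono (le_max_left _ _), ratNN_mono (le_max_right _ _)⟩
  show max q.1 q'.1 = 0 ∨ L.1.cut (max q.1 q'.1)
  rcases le_total q.1 q'.1 with h | h
  · rw [max_eq_right h]; exact hq'
  · rw [max_eq_left h]; exact hq

/-- the union of a countable nonempty family of non-negative lower reals -/
def unionNN (U : Set NNLowerReal) (hne : U.Nonempty) (hc : U.Countable) : NNLowerReal := by
  refine ⟨⟨fun q => q < 0 ∨ ∃ L ∈ U, L.1.cut q, ?_, ⟨-1, Or.inl (by norm_num)⟩, ?_, ?_⟩,
    fun q hq => Or.inl hq⟩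
  · intro q
    have : Countable ↥U := hc.to_subtype
    have : Nonempty ↥U := hne.to_subtype
    refine (InS.of_decidable (q < 0)).or (InS.congr ?_
      (InS.exists' (fun L : ↥U => (L : NNLowerReal).1.cut q) (fun L => L.1.1.inS q)))
    exact ⟨fun ⟨L, h⟩ => ⟨L, L.2, h⟩, fun ⟨L, hLU, h⟩ => ⟨⟨L, hLU⟩, h⟩⟩
  · rintro q (hq | ⟨L, hL, hq⟩)
    · exact ⟨q / 2, by linarith, Or.inl (by linarith)⟩
    · obtain ⟨q', h1, h2⟩ := L.1.rounded q hq
      exact ⟨q', h1, Or.inr ⟨L, hL, h2⟩⟩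
  · rintro q q' h (hq | ⟨L, hL, hq⟩)
    · exact Or.inl (lt_trans h hq)
    · exact Or.inr ⟨L, hL, L.1.lower q q' h hq⟩

theorem isLUB_unionNN (U : Set NNLowerReal) (hne : U.Nonempty) (hc : U.Countable) :
    IsLUB U (unionNN U hne hc) := by
  constructor
  · intro L hL q hq; exact Or.inr ⟨L, hL, hq⟩
  · rintro M hM q (hq | ⟨L, hL, hq⟩)
    · exact M.2 q hq
    · exact hM hL q hq

theorem cut_of_isLUB_NN {U : Set NNLowerReal} {x : NNLowerReal} (hne : U.Nonempty)
    (hc : U.Countable) (h : IsLUB U x) {q : ℚ} :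
    x.1.cut q ↔ q < 0 ∨ ∃ L ∈ U, L.1.cut q := by
  rw [isLUB_uniqueNN h (isLUB_unionNN U hne hc)]; exact Iff.rfl

/-- multiplication of non-negative lower reals -/
def mulNN (L₁ L₂ : NNLowerReal) : NNLowerReal := by
  refine ⟨⟨fun q => q < 0 ∨
      ∃ q₁ q₂, 0 ≤ q₁ ∧ 0 ≤ q₂ ∧ L₁.1.cut q₁ ∧ L₂.1.cut q₂ ∧ q₁ * q₂ = q,
    ?_, ⟨-1, Or.inl (by norm_num)⟩, ?_, ?_⟩, fun q hq => Or.inl hq⟩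
  · intro q
    refine (InS.of_decidable (q < 0)).or (InS.congr ?_
      (InS.exists' (fun p : ℚ × ℚ =>
        0 ≤ p.1 ∧ 0 ≤ p.2 ∧ L₁.1.cut p.1 ∧ L₂.1.cut p.2 ∧ p.1 * p.2 = q)
        (fun p => (InS.of_decidable _).and ((InS.of_decidable _).and
          ((L₁.1.inS p.1).and ((L₂.1.inS p.2).and (InS.of_decidable _)))))))
    exact ⟨fun ⟨p, h⟩ => ⟨p.1, p.2, h⟩, fun ⟨q₁, q₂, h⟩ => ⟨(q₁, q₂), h⟩⟩
  · rintro q (hq | ⟨q₁, q₂, hn₁, hn₂, h₁, h₂, rfl⟩)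
    · exact ⟨q / 2, by linarith, Or.inl (by linarith)⟩
    · obtain ⟨q₁', hlt₁, h₁'⟩ := L₁.1.rounded q₁ h₁
      obtain ⟨q₂', hlt₂, h₂'⟩ := L₂.1.rounded q₂ h₂
      refine ⟨q₁' * q₂', by nlinarith, Or.inr ⟨q₁', q₂', by linarith, by linarith,
        h₁', h₂', rfl⟩⟩
  · rintro q q' h (hq | ⟨q₁, q₂, hn₁, hn₂, h₁, h₂, rfl⟩)
    · exact Or.inl (lt_trans h hq)
    · by_cases hq0 : q < 0
      · exact Or.inl hq0
      · have hq : 0 ≤ q := not_lt.mp hq0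
        have hq₁ : 0 < q₁ := by nlinarith
        refine Or.inr ⟨q₁, q / q₁, hn₁, div_nonneg hq (le_of_lt hq₁), h₁,
          L₂.1.lower _ _ ((div_lt_iff₀ hq₁).mpr (by nlinarith)) h₂, by field_simp⟩

theorem mulNN_mono_right (L : NNLowerReal) : Monotone (mulNN L) := by
  rintro x y hxy q (hq | ⟨q₁, q₂, hn₁, hn₂, h₁, h₂, rfl⟩)
  · exact Or.inl hq
  · exact Or.inr ⟨q₁, q₂, hn₁, hn₂, h₁, hxy q₂ h₂, rfl⟩

theorem mulNN_comm (L₁ L₂ : NNLowerReal) : mulNN L₁ L₂ = mulNN L₂ L₁ := by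
  refine NNLowerReal.eq_of_le_le ?_ ?_ <;>
  · rintro q (hq | ⟨q₁, q₂, hn₁, hn₂, h₁, h₂, rfl⟩)
    · exact Or.inl hq
    · exact Or.inr ⟨q₂, q₁, hn₂, hn₁, h₂, h₁, by ring⟩

theorem mulNN_cont_right (L : NNLowerReal) : OmegaContinuous (mulNN L) := by
  refine ⟨mulNN_mono_right L, fun U x hc hne hdir hlub => ?_⟩
  constructor
  · rintro _ ⟨u, hu, rfl⟩; exact mulNN_mono_right L (hlub.1 hu)
  · rintro M hM q (hq | ⟨q₁, q₂, hn₁, hn₂, h₁, h₂, rfl⟩)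
    · exact M.2 q hq
    · rcases (cut_of_isLUB_NN hne hc hlub).mp h₂ with h0 | ⟨u, hu, hu₂⟩
      · exact absurd h0 (not_lt.mpr hn₂)
      · exact hM ⟨u, hu, rfl⟩ _ (Or.inr ⟨q₁, q₂, hn₁, hn₂, h₁, hu₂, rfl⟩)

theorem mulNN_cont_left (L : NNLowerReal) : OmegaContinuous (fun x => mulNN x L) := by
  have h : (fun x => mulNN x L) = mulNN L := funext fun x => mulNN_comm x L
  rw [h]; exact mulNN_cont_right L

theorem mulNN_rat (q q' : QPlus) :
    mulNN (ratNN q) (ratNN q') = ratNN ⟨q.1 * q'.1, mul_nonneg q.2 q'.2⟩ := by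
  refine NNLowerReal.eq_of_le_le ?_ ?_
  · rintro p (hp | ⟨q₁, q₂, hn₁, hn₂, h₁, h₂, rfl⟩)
    · exact lt_of_lt_of_le hp (mul_nonneg q.2 q'.2)
    · have h₁ : q₁ < q.1 := h₁
      have h₂ : q₂ < q'.1 := h₂
      show q₁ * q₂ < q.1 * q'.1
      nlinarith
  · intro p hp
    have hp' : p < q.1 * q'.1 := hp
    by_cases hp0 : p < 0
    · exact Or.inl hp0
    · have hp0 : 0 ≤ p := not_lt.mp hp0
      have hq : 0 < q.1 := by nlinarith [q.2, q'.2]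
      have hq' : 0 < q'.1 := by nlinarith [q.2, q'.2]
      set m : ℚ := (p / q.1 + q'.1) / 2 with hm
      have hdiv : p / q.1 < q'.1 := (div_lt_iff₀ hq).mpr (by nlinarith)
      have hdn : 0 ≤ p / q.1 := div_nonneg hp0 (le_of_lt hq)
      have hm0 : 0 < m := by rw [hm]; linarith
      have hmlt : m < q'.1 := by rw [hm]; linarith
      have hpm : p / m < q.1 := by
        rw [div_lt_iff₀ hm0]
        have : p / q.1 < m := by rw [hm]; linarith
        nlinarith [(div_lt_iff₀ hq).mp this]
      exact Or.inr ⟨p / m, m, div_nonneg hp0 (le_of_lt hm0), le_of_lt hm0,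
        hpm, hmlt, div_mul_cancel₀ p (ne_of_gt hm0)⟩

theorem mulNN_spec : MulSpecNN mulNN :=
  ⟨mulNN_cont_right, mulNN_cont_left, mulNN_rat⟩

theorem agree_of_ratNN {f g : NNLowerReal → NNLowerReal} (hf : OmegaContinuous f)
    (hg : OmegaContinuous g) (h : ∀ q, f (ratNN q) = g (ratNN q)) (L : NNLowerReal) :
    f L = g L := by
  have hfl := hf.2 _ L (ratSetNN_countable L) (ratSetNN_nonempty L)
    (ratSetNN_directed L) (isLUB_ratNN L)
  have hgl := hg.2 _ L (ratSetNN_countable L) (ratSetNN_nonempty L)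
    (ratSetNN_directed L) (isLUB_ratNN L)
  have himg : f '' ratSetNN L = g '' ratSetNN L := by
    rw [ratSetNN, ← Set.image_comp, ← Set.image_comp]
    exact Set.image_congr (fun q _ => h q)
  rw [himg] at hfl
  exact isLUB_uniqueNN hfl hgl

theorem mul_unique (mul : NNLowerReal → NNLowerReal → NNLowerReal) (h : MulSpecNN mul) :
    mul = mulNN := by
  obtain ⟨hr, hl, hq⟩ := h
  have step1 : ∀ q L, mul (ratNN q) L = mulNN (ratNN q) L := fun q L =>
    agree_of_ratNN (hr _) (mulNN_cont_right _)
      (fun r => by rw [hq, mulNN_rat]) L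
  funext L₁ L₂
  exact agree_of_ratNN (hl L₂) (mulNN_cont_left L₂) (fun q => step1 q L₂) L₁

/-- addition on `ℚ` extends uniquely to an ω-continuous binary operation
on `ℝ_l`, multiplication on `ℚ⁺` extends uniquely to an ω-continuous binary operation
on `ℝ_l⁺`, and the extended addition is given by the Minkowski sum of lower cuts:
`q ∈ L₁ + L₂` iff there merely exist `q₁ ∈ L₁` and `q₂ ∈ L₂` with `q₁ + q₂ = q`. -/
theorem lower_real_arithmetic :
    (∃! add : LowerReal → LowerReal → LowerReal, AddSpec add) ∧
      (∀ add : LowerReal → LowerReal → LowerReal, AddSpec add →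
        ∀ L₁ L₂ q, (add L₁ L₂).cut q ↔
          ∃ q₁ q₂, L₁.cut q₁ ∧ L₂.cut q₂ ∧ q₁ + q₂ = q) ∧
      (∃! mul : NNLowerReal → NNLowerReal → NNLowerReal, MulSpecNN mul) := by
  refine ⟨⟨addLR, addLR_spec, add_unique⟩, ?_, ⟨mulNN, mulNN_spec, mul_unique⟩⟩
  intro add h L₁ L₂ q
  rw [add_unique add h]
  exact Iff.rfl
end

section
/- Generalized modularity lemma: let L be a distributive lattice with bottom element and x₁,…,x_n ∈ L. Then in the modular monoid M(L), ∑_{i=1}^n x_i = ∑_{k=1}^n ⋁{ x_I : I ⊆ {1,…,n}, |I| = k }, where x_I = ⋀_{i∈I} x_i. -/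
section GenModAux

variable {L M : Type} [DistribLattice L] [OrderBot L] [AddCommMonoid M]
variable {ι : Type} [DecidableEq ι]

/-- `gmF x I = ⋀_{i ∈ I} x i` (with `⊥` for the empty set). -/
private def gmF (x : ι → L) (I : Finset ι) : L :=
  if h : I.Nonempty then I.inf' h x else ⊥

/-- `gmE x s k = ⋁ { gmF x I : I ⊆ s, |I| = k }`. -/
private def gmE (x : ι → L) (s : Finset ι) (k : ℕ) : L :=
  (s.powersetCard k).sup (gmF x)

private lemma gmF_anti (x : ι → L) {I J : Finset ι} (hI : I.Nonempty) (hIJ : I ⊆ J) :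
    gmF x J ≤ gmF x I := by
  have hJ : J.Nonempty := hI.mono hIJ
  simp only [gmF, dif_pos hI, dif_pos hJ]
  exact Finset.inf'_mono (f := x) hIJ hI

private lemma gmF_le_gmE (x : ι → L) {s I : Finset ι} {k : ℕ}
    (h : I ∈ s.powersetCard k) : gmF x I ≤ gmE x s k :=
  Finset.le_sup h

private lemma gmE_succ_le (x : ι → L) (s : Finset ι) (k : ℕ) (hk : 1 ≤ k) :
    gmE x s (k + 1) ≤ gmE x s k := by
  apply Finset.sup_le
  intro I hI
  rw [Finset.mem_powersetCard] at hI
  obtain ⟨hIs, hcard⟩ := hI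
  obtain ⟨J, hJI, hJcard⟩ := Finset.exists_subset_card_eq (s := I) (n := k) (by omega)
  have hJne : J.Nonempty := Finset.card_pos.mp (by omega)
  calc gmF x I ≤ gmF x J := gmF_anti x hJne hJI
    _ ≤ gmE x s k := gmF_le_gmE x (Finset.mem_powersetCard.mpr ⟨hJI.trans hIs, hJcard⟩)

private lemma gmE_insert (x : ι → L) {a : ι} {s : Finset ι} (ha : a ∉ s) (k : ℕ) (hk : 1 ≤ k) :
    gmE x (insert a s) (k + 1) = gmE x s (k + 1) ⊔ (x a ⊓ gmE x s k) := by
  rw [gmE, Finset.powersetCard_succ_insert ha, Finset.sup_union, Finset.sup_image]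
  congr 1
  rw [gmE, Finset.sup_inf_distrib_left]
  apply Finset.sup_congr rfl
  intro I hI
  rw [Finset.mem_powersetCard] at hI
  have hIne : I.Nonempty := Finset.card_pos.mp (by omega)
  have haI : a ∉ I := fun h => ha (hI.1 h)
  simp only [Function.comp_apply, gmF, dif_pos hIne,
    dif_pos (Finset.insert_nonempty a I)]
  exact Finset.inf'_insert hIne x

private lemma gmE_insert_one (x : ι → L) {a : ι} {s : Finset ι} (ha : a ∉ s) :
    gmE x (insert a s) 1 = gmE x s 1 ⊔ x a := by
  rw [gmE, show (1 : ℕ) = 0 + 1 from rfl, Finset.powersetCard_succ_insert ha,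
    Finset.sup_union, Finset.sup_image, Finset.powersetCard_zero, Finset.sup_singleton]
  simp [gmF, gmE, Function.comp]

private lemma gmE_self (x : ι → L) (s : Finset ι) : gmE x s s.card = gmF x s := by
  rw [gmE, Finset.powersetCard_self, Finset.sup_singleton]

private lemma telescope (c u v : ℕ → M) :
    ∀ m : ℕ, (∀ k < m, c k + u k = c (k + 1) + v k) →
      c 0 + ∑ k ∈ Finset.range m, u k = c m + ∑ k ∈ Finset.range m, v k := by
  intro m
  induction m with
  | zero => simp
  | succ m ih =>
    intro h
    rw [Finset.sum_range_succ, Finset.sum_range_succ, ← add_assoc,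
      ih (fun k hk => h k (by omega)), add_right_comm, h m (by omega)]
    abel

private lemma gm_main (μ : L → M) (hbot : μ ⊥ = 0)
    (hmod : ∀ a b : L, μ a + μ b = μ (a ⊓ b) + μ (a ⊔ b))
    (x : ι → L) (s : Finset ι) :
    ∑ i ∈ s, μ (x i) = ∑ k ∈ Finset.range s.card, μ (gmE x s (k + 1)) := by
  induction s using Finset.cons_induction with
  | empty => simp
  | cons a s ha ih =>
    rw [Finset.cons_eq_insert] at *
    rw [Finset.sum_insert ha, ih]
    set m := s.card with hm
    have hcard : (insert a s).card = m + 1 := Finset.card_insert_of_notMem ha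
    rw [hcard]
    -- the carry sequence
    set c : ℕ → M := fun k => if k = 0 then μ (x a) else μ (x a ⊓ gmE x s k) with hc
    have step : ∀ k < m, c k + μ (gmE x s (k + 1)) =
        c (k + 1) + μ (gmE x (insert a s) (k + 1)) := by
      intro k hk
      cases k with
      | zero =>
        simp only [hc, if_pos rfl, if_neg (Nat.one_ne_zero)]
        rw [hmod (x a) (gmE x s 1), gmE_insert_one x ha, sup_comm]
      | succ k =>
        simp only [hc, if_neg (Nat.succ_ne_zero _), if_neg (Nat.succ_ne_zero _)]
        rw [hmod (x a ⊓ gmE x s (k + 1)) (gmE x s (k + 2))]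
        congr 1
        · congr 1
          rw [inf_assoc]
          congr 1
          exact inf_eq_right.mpr (gmE_succ_le x s (k + 1) (by omega))
        · rw [gmE_insert x ha (k + 1) (by omega), sup_comm]
    have key := telescope c (fun k => μ (gmE x s (k + 1)))
      (fun k => μ (gmE x (insert a s) (k + 1))) m step
    have hc0 : c 0 = μ (x a) := by simp [hc]
    have hcm : c m = μ (gmE x (insert a s) (m + 1)) := by
      have hEtop : gmE x (insert a s) (m + 1) = gmF x (insert a s) := by
        have : (insert a s).card = m + 1 := hcard
        rw [← this, gmE_self]
      rw [hEtop]
      cases Nat.eq_zero_or_pos m with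
      | inl h0 =>
        have hs : s = ∅ := Finset.card_eq_zero.mp (h0 ▸ hm.symm)
        subst hs
        simp [hc, h0, gmF]
      | inr hpos =>
        have hsne : s.Nonempty := Finset.card_pos.mp (hm ▸ hpos)
        have hEm : gmE x s m = gmF x s := hm ▸ gmE_self x s
        have hfins : gmF x (insert a s) = x a ⊓ gmF x s := by
          simp only [gmF, dif_pos hsne, dif_pos (Finset.insert_nonempty a s)]
          exact Finset.inf'_insert hsne x
        simp only [hc, if_neg (by omega : ¬ m = 0), hEm, hfins]
    rw [hc0] at key
    rw [key, hcm, Finset.sum_range_succ, add_comm]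

end GenModAux

/-- generalized modularity lemma: for a distributive lattice `L` with
bottom and `x₁, …, x_n ∈ L`, every modular bottom-preserving map `μ` from `L` into a
commutative monoid (equivalently, the identity in the modular monoid `M(L)`) satisfies
`∑_{i=1}^n μ(x_i) = ∑_{k=1}^n μ(⋁{x_I : I ⊆ {1,…,n}, |I| = k})`, where
`x_I = ⋀_{i∈I} x_i`. -/
theorem generalized_modularity
    {L M : Type} [DistribLattice L] [OrderBot L] [AddCommMonoid M]
    (μ : L → M) (hbot : μ ⊥ = 0)
    (hmod : ∀ a b : L, μ a + μ b = μ (a ⊓ b) + μ (a ⊔ b))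
    (n : ℕ) (x : Fin n → L) :
    ∑ i, μ (x i) =
      ∑ k : Fin n,
        μ (((Finset.univ : Finset (Fin n)).powersetCard (k.1 + 1)).sup'
            (Finset.powersetCard_nonempty.2 (by simp only [Finset.card_univ, Fintype.card_fin]; omega))
            (fun I => if h : I.Nonempty then I.inf' h x else ⊥)) := by
  have h := gm_main μ hbot hmod x (Finset.univ : Finset (Fin n))
  rw [Finset.card_univ, Fintype.card_fin] at h
  rw [h, ← Fin.sum_univ_eq_sum_range (fun k => μ (gmE x Finset.univ (k + 1))) n]
  apply Finset.sum_congr rfl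
  intro k hk
  congr 1
  rw [Finset.sup'_eq_sup]
  rfl
end

section
/- Cancellation for lower reals: given lower reals u₁,…,u_n and v, the equation u₁ + ⋯ + u_n + x = v has at most one solution x ∈ ℝ_l satisfying u_i ≤ x for all i. -/
/-!
To show `x ≤ y`, take `q < q'` in the cut of `x` and any choice of rationals `rᵢ` in the
cuts of the `uᵢ`. Then `∑ rᵢ + q'` lies in `v`, so it can be rewritten as `∑ sᵢ + t` with
`sᵢ` in `uᵢ` and `t` in `y`. Either `q ≤ t`, and `q` lies in `y`, or `∑ sᵢ` exceeds `∑ rᵢ`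
by more than `q' - q`. After finitely many rounds `∑ sᵢ > n q`, so some `sᵢ > q`; since
`uᵢ ≤ y`, again `q` lies in `y`.
-/

namespace LowerReal

theorem cut_of_le {L : LowerReal} {q q' : ℚ} (h : q ≤ q') (hq' : L.cut q') : L.cut q :=
  h.lt_or_eq.elim (fun h => L.lower q q' h hq') (· ▸ hq')

protected theorem ext {x y : LowerReal} (h : x.cut = y.cut) : x = y := by
  cases x; cases y; congr

protected theorem le_antisymm {x y : LowerReal} (hxy : x ≤ y) (hyx : y ≤ x) : x = y :=
  LowerReal.ext <| funext fun q => propext ⟨hxy q, hyx q⟩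

theorem cut_foldr_add_iff {add : LowerReal → LowerReal → LowerReal}
    (hadd : ∀ L₁ L₂ q, (add L₁ L₂).cut q ↔
      ∃ q₁ q₂, L₁.cut q₁ ∧ L₂.cut q₂ ∧ q₁ + q₂ = q) :
    ∀ {n : ℕ} (u : Fin n → LowerReal) (w : LowerReal) (m : ℚ),
      ((List.ofFn u).foldr add w).cut m ↔
        ∃ r : Fin n → ℚ, (∀ i, (u i).cut (r i)) ∧ ∃ t, w.cut t ∧ ∑ i, r i + t = m
  | 0, u, w, m => by simp
  | n + 1, u, w, m => by
    rw [List.ofFn_succ, List.foldr_cons, hadd]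
    constructor
    · rintro ⟨q₁, q₂, h₁, h₂, rfl⟩
      obtain ⟨r, hr, t, ht, rfl⟩ := (cut_foldr_add_iff hadd _ w q₂).1 h₂
      refine ⟨Fin.cons q₁ r, Fin.cases h₁ hr, t, ht, ?_⟩
      simp [Fin.sum_univ_succ, add_assoc]
    · rintro ⟨r, hr, t, ht, rfl⟩
      refine ⟨r 0, ∑ i : Fin n, r i.succ + t, hr 0,
        (cut_foldr_add_iff hadd _ w _).2 ⟨_, fun i => hr i.succ, t, ht, rfl⟩, ?_⟩
      simp [Fin.sum_univ_succ, add_assoc]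

theorem cut_of_mul_lt_sum {n : ℕ} {u : Fin n → LowerReal} {y : LowerReal}
    (hy : ∀ i, u i ≤ y) {r : Fin n → ℚ} (hr : ∀ i, (u i).cut (r i)) {q : ℚ}
    (h : n * q < ∑ i, r i) : y.cut q := by
  have h' : ∑ _i : Fin n, q < ∑ i, r i := by simpa using h
  obtain ⟨i, -, hi⟩ := Finset.exists_lt_of_sum_lt h'
  exact y.lower q (r i) hi (hy i _ (hr i))

theorem le_of_foldr_add_eq {add : LowerReal → LowerReal → LowerReal}
    (hadd : ∀ L₁ L₂ q, (add L₁ L₂).cut q ↔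
      ∃ q₁ q₂, L₁.cut q₁ ∧ L₂.cut q₂ ∧ q₁ + q₂ = q)
    {n : ℕ} {u : Fin n → LowerReal} {x y : LowerReal} (hy : ∀ i, u i ≤ y)
    (h : (List.ofFn u).foldr add x = (List.ofFn u).foldr add y) : x ≤ y := by
  intro q hq
  obtain ⟨q', hqq', hq'⟩ := x.rounded q hq
  have hδ : 0 < q' - q := sub_pos.2 hqq'
  suffices key : ∀ k : ℕ, ∀ r : Fin n → ℚ, (∀ i, (u i).cut (r i)) →
      n * q < ∑ i, r i + k * (q' - q) → y.cut q by
    choose r hr using fun i => (u i).inhab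
    obtain ⟨k, hk⟩ := exists_nat_gt ((n * q - ∑ i, r i) / (q' - q))
    rw [div_lt_iff₀ hδ] at hk
    exact key k r hr (by linarith)
  intro k
  induction k with
  | zero => intro r hr hsum; exact cut_of_mul_lt_sum hy hr (by simpa using hsum)
  | succ k ih =>
    intro r hr hsum
    have hv : ((List.ofFn u).foldr add x).cut (∑ i, r i + q') :=
      (cut_foldr_add_iff hadd u x _).2 ⟨r, hr, q', hq', rfl⟩
    rw [h] at hv
    obtain ⟨s, hs, t, ht, hst⟩ := (cut_foldr_add_iff hadd u y _).1 hv
    rcases le_or_gt q t with hqt | htq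
    · exact cut_of_le hqt ht
    · exact ih s hs (by push_cast at hsum; linarith)

end LowerReal

/-- cancellation for lower reals: given lower reals `u₁, …, u_n` and
`v`, where addition is the Minkowski sum of lower cuts, the equation
`u₁ + ⋯ + u_n + x = v` has at most one solution `x` with `u_i ≤ x` for all `i`. -/
theorem lower_real_cancellation
    (add : LowerReal → LowerReal → LowerReal)
    (hadd : ∀ L₁ L₂ q, (add L₁ L₂).cut q ↔
      ∃ q₁ q₂, L₁.cut q₁ ∧ L₂.cut q₂ ∧ q₁ + q₂ = q)
    (n : ℕ) (u : Fin n → LowerReal) (v x y : LowerReal)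
    (hx : ∀ i, u i ≤ x) (hy : ∀ i, u i ≤ y)
    (hvx : (List.ofFn u).foldr add x = v) (hvy : (List.ofFn u).foldr add y = v) :
    x = y :=
  LowerReal.le_antisymm (LowerReal.le_of_foldr_add_eq hadd hy (hvx.trans hvy.symm))
    (LowerReal.le_of_foldr_add_eq hadd hx (hvy.trans hvx.symm))
end
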